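/- (Corollary 5, global reprojection as a weighted sum.) Let X^w ∈ ℝ³ be a world point, let (R_i, t_i) be a camera with R_i ∈ SO(3) and t_i ∈ ℝ³, and let (R_j, t_j), j ∈ J, with J a finite nonempty index set, be further cameras. Set z_i := e₃ᵀ R_i (X^w − t_i) and z_j := e₃ᵀ R_j (X^w − t_j), and assume z_i > 0 and z_j > 0 for all j ∈ J. Define the noise-free observations X_i := R_i (X^w − t_i)/z_i and X_j := R_j (X^w − t_j)/z_j, the relative poses R_{ji} := R_i R_jᵀ and t_{ji} := R_i (t_j − t_i), and θ_j := (R_{ji} X_j) × X_i for each j ∈ J. Assume W := Σ_{j ∈ J} ‖θ_j‖ > 0 and set ω_j := ‖θ_j‖ / W. For each j with θ_j ≠ 0 define the two-view reprojection coordinate X^i_j := ( ‖X_i × t_{ji}‖ · R_{ji} X_j + ‖θ_j‖ · t_{ji} ) / ‖(R_{ji} X_j) × t_{ji}‖. Then the reprojection coordinate of X^w in camera i equals the weighted sum of the two-view reprojection coordinates: X_i = Σ_{j ∈ J, θ_j ≠ 0} ω_j X^i_j. -/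

import Mathlib

/-!
Write `u := R_{ji} X_j`. Both `z_i X_i` and `z_j u` are the world point seen from camera `i`,
translated by `t_i` resp. `t_j`, so `t_{ji} = z_i X_i - z_j u`. Crossing this with `u` and with
`X_i` gives `u × t_{ji} = z_i θ_j` and `X_i × t_{ji} = z_j θ_j`; substituting the norms shows that
every two-view coordinate `X^i_j` with `θ_j ≠ 0` equals `X_i`, and the weights `ω_j` sum to one.
-/

open Matrix Classical

noncomputable def enorm3 (v : Fin 3 → ℝ) : ℝ := Real.sqrt (v ⬝ᵥ v)

lemma enorm3_smul (c : ℝ) (v : Fin 3 → ℝ) : enorm3 (c • v) = |c| * enorm3 v := by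
  unfold enorm3
  rw [smul_dotProduct, dotProduct_smul, smul_eq_mul, smul_eq_mul, ← mul_assoc, ← sq,
    Real.sqrt_mul (sq_nonneg c), Real.sqrt_sq_eq_abs]

lemma enorm3_pos {v : Fin 3 → ℝ} (hv : v ≠ 0) : 0 < enorm3 v :=
  Real.sqrt_pos.mpr (dotProduct_self_star_pos_iff.mpr hv)

lemma enorm3_zero : enorm3 0 = 0 := by simp [enorm3]

section CrossProduct

variable {R : Type*} [CommRing R] (a b : R) (u x : Fin 3 → R)

lemma cross_smul_sub_smul_self_left : u ⨯₃ (a • x - b • u) = a • (u ⨯₃ x) := by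
  rw [map_sub, map_smul, map_smul, cross_self, smul_zero, sub_zero]

lemma cross_smul_sub_smul_self_right : x ⨯₃ (a • x - b • u) = b • (u ⨯₃ x) := by
  rw [map_sub, map_smul, map_smul, cross_self, smul_zero, zero_sub, ← smul_neg,
    cross_anticomm]

end CrossProduct

lemma two_view_reprojection {a b : ℝ} (ha : 0 < a) (hb : 0 < b) {u x : Fin 3 → ℝ}
    (hux : u ⨯₃ x ≠ 0) :
    (enorm3 (u ⨯₃ (a • x - b • u)))⁻¹ •
      (enorm3 (x ⨯₃ (a • x - b • u)) • u + enorm3 (u ⨯₃ x) • (a • x - b • u)) = x := by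
  rw [cross_smul_sub_smul_self_left, cross_smul_sub_smul_self_right, enorm3_smul, enorm3_smul,
    abs_of_pos ha, abs_of_pos hb]
  set N := enorm3 (u ⨯₃ x)
  have hN : 0 < N := enorm3_pos hux
  have hsum : (b * N) • u + N • (a • x - b • u) = (a * N) • x := by module
  rw [hsum, smul_smul, inv_mul_cancel₀ (by positivity), one_smul]

lemma relative_translation_eq {K n : Type*} [Field K] [Fintype n] [DecidableEq n]
    {Ri Rj : Matrix n n K} (hRj : Rjᵀ * Rj = 1) {Xw ti tj Xi Xj : n → K} {zi zj : K}
    (hzi : zi ≠ 0) (hzj : zj ≠ 0)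
    (hXi : Xi = zi⁻¹ • Ri *ᵥ (Xw - ti)) (hXj : Xj = zj⁻¹ • Rj *ᵥ (Xw - tj)) :
    Ri *ᵥ (tj - ti) = zi • Xi - zj • (Ri * Rjᵀ) *ᵥ Xj := by
  rw [hXi, hXj, smul_smul, mul_inv_cancel₀ hzi, one_smul, mulVec_smul, smul_smul,
    mul_inv_cancel₀ hzj, one_smul, mulVec_mulVec, Matrix.mul_assoc, hRj, Matrix.mul_one,
    ← mulVec_sub, sub_sub_sub_cancel_left]

lemma sum_filter_smul_eq_of_weights {ι K M : Type*} [Field K] [AddCommGroup M] [Module K M]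
    (J : Finset ι) (p : ι → Prop) [DecidablePred p] (n ω : ι → K) (W : K) (v : ι → M) (x : M)
    (hW : W = ∑ j ∈ J, n j) (hW0 : W ≠ 0) (hω : ∀ j ∈ J, ω j = n j / W)
    (hn : ∀ j ∈ J, ¬ p j → n j = 0) (hv : ∀ j ∈ J, p j → v j = x) :
    ∑ j ∈ J.filter p, ω j • v j = x := by
  have hω_sum : ∑ j ∈ J, ω j = 1 := by
    rw [Finset.sum_congr rfl hω, ← Finset.sum_div, ← hW, div_self hW0]
  calc ∑ j ∈ J.filter p, ω j • v j = ∑ j ∈ J, ω j • x := by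
        rw [Finset.sum_filter]
        refine Finset.sum_congr rfl fun j hj => ?_
        by_cases hp : p j
        · rw [if_pos hp, hv j hj hp]
        · rw [if_neg hp, hω j hj, hn j hj hp, zero_div, zero_smul]
    _ = x := by rw [← Finset.sum_smul, hω_sum, one_smul]

theorem stmt18_general {ι : Type*} (J : Finset ι)
    (Xw : Fin 3 → ℝ)
    (Ri : Matrix (Fin 3) (Fin 3) ℝ) (ti : Fin 3 → ℝ)
    (Rj : ι → Matrix (Fin 3) (Fin 3) ℝ) (tj : ι → Fin 3 → ℝ)
    (hRj : ∀ j ∈ J, (Rj j)ᵀ * Rj j = 1)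
    (zi : ℝ) (hzipos : 0 < zi)
    (zj : ι → ℝ)
    (hzjpos : ∀ j ∈ J, 0 < zj j)
    (Xi : Fin 3 → ℝ) (hXi : Xi = zi⁻¹ • Ri.mulVec (Xw - ti))
    (Xj : ι → Fin 3 → ℝ) (hXj : ∀ j ∈ J, Xj j = (zj j)⁻¹ • (Rj j).mulVec (Xw - tj j))
    (Rji : ι → Matrix (Fin 3) (Fin 3) ℝ) (hRji : ∀ j ∈ J, Rji j = Ri * (Rj j)ᵀ)
    (tji : ι → Fin 3 → ℝ) (htji : ∀ j ∈ J, tji j = Ri.mulVec (tj j - ti))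
    (θ : ι → Fin 3 → ℝ) (hθ : ∀ j ∈ J, θ j = ((Rji j).mulVec (Xj j)) ⨯₃ Xi)
    (W : ℝ) (hW : W = ∑ j ∈ J, enorm3 (θ j)) (hWpos : 0 < W)
    (ω : ι → ℝ) (hω : ∀ j ∈ J, ω j = enorm3 (θ j) / W)
    (Xrep : ι → Fin 3 → ℝ)
    (hXrep : ∀ j ∈ J, θ j ≠ 0 →
      Xrep j = (enorm3 (((Rji j).mulVec (Xj j)) ⨯₃ tji j))⁻¹ •
        (enorm3 (Xi ⨯₃ tji j) • (Rji j).mulVec (Xj j) + enorm3 (θ j) • tji j)) :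
    Xi = ∑ j ∈ J.filter (fun j => θ j ≠ 0), ω j • Xrep j := by
  have hrep : ∀ j ∈ J, θ j ≠ 0 → Xrep j = Xi := by
    intro j hj hθj
    have htdec : tji j = zi • Xi - zj j • Rji j *ᵥ Xj j := by
      rw [htji j hj, hRji j hj]
      exact relative_translation_eq (hRj j hj) hzipos.ne' (hzjpos j hj).ne' hXi (hXj j hj)
    rw [hXrep j hj hθj, hθ j hj, htdec]
    exact two_view_reprojection hzipos (hzjpos j hj) (hθ j hj ▸ hθj)
  refine (sum_filter_smul_eq_of_weights J _ (fun j => enorm3 (θ j)) ω W Xrep Xi hW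
    hWpos.ne' hω (fun j _ hj => ?_) hrep).symm
  rw [not_not.mp hj, enorm3_zero]

/-- Corollary 5, global reprojection as a weighted sum: with noise-free
observations of a world point `Xw` in camera `i` and cameras `j ∈ J`, the reprojection
coordinate of `Xw` in camera `i` equals the weighted sum of the two-view pose-only
reprojection coordinates over the views `j` with `θⱼ ≠ 0`. -/
theorem stmt18 {ι : Type*} (J : Finset ι) (hJ : J.Nonempty)
    (Xw : Fin 3 → ℝ)
    (Ri : Matrix (Fin 3) (Fin 3) ℝ) (ti : Fin 3 → ℝ)
    (hRi : Riᵀ * Ri = 1) (hRidet : Ri.det = 1)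
    (Rj : ι → Matrix (Fin 3) (Fin 3) ℝ) (tj : ι → Fin 3 → ℝ)
    (hRj : ∀ j ∈ J, (Rj j)ᵀ * Rj j = 1) (hRjdet : ∀ j ∈ J, (Rj j).det = 1)
    (zi : ℝ) (hzi : zi = (Ri.mulVec (Xw - ti)) 2) (hzipos : 0 < zi)
    (zj : ι → ℝ) (hzj : ∀ j ∈ J, zj j = ((Rj j).mulVec (Xw - tj j)) 2)
    (hzjpos : ∀ j ∈ J, 0 < zj j)
    (Xi : Fin 3 → ℝ) (hXi : Xi = zi⁻¹ • Ri.mulVec (Xw - ti))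
    (Xj : ι → Fin 3 → ℝ) (hXj : ∀ j ∈ J, Xj j = (zj j)⁻¹ • (Rj j).mulVec (Xw - tj j))
    (Rji : ι → Matrix (Fin 3) (Fin 3) ℝ) (hRji : ∀ j ∈ J, Rji j = Ri * (Rj j)ᵀ)
    (tji : ι → Fin 3 → ℝ) (htji : ∀ j ∈ J, tji j = Ri.mulVec (tj j - ti))
    (θ : ι → Fin 3 → ℝ) (hθ : ∀ j ∈ J, θ j = ((Rji j).mulVec (Xj j)) ⨯₃ Xi)
    (W : ℝ) (hW : W = ∑ j ∈ J, enorm3 (θ j)) (hWpos : 0 < W)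
    (ω : ι → ℝ) (hω : ∀ j ∈ J, ω j = enorm3 (θ j) / W)
    (Xrep : ι → Fin 3 → ℝ)
    (hXrep : ∀ j ∈ J, θ j ≠ 0 →
      Xrep j = (enorm3 (((Rji j).mulVec (Xj j)) ⨯₃ tji j))⁻¹ •
        (enorm3 (Xi ⨯₃ tji j) • (Rji j).mulVec (Xj j) + enorm3 (θ j) • tji j)) :
    Xi = ∑ j ∈ J.filter (fun j => θ j ≠ 0), ω j • Xrep j :=
  stmt18_general J Xw Ri ti Rj tj hRj zi hzipos zj hzjpos Xi hXi Xj hXj Rji hRji tji htji θ hθ W hW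
    hWpos ω hω Xrep hXrep
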